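/- arXiv:2304.11010 — 12 statements merged into one kernel-verified Lean document; each statement's English description precedes it below -/
import Mathlib

section
/- For any pool state s and price P > 0, the state τ(s, a*(s,P)) reached by applying an optimal action is a no-arbitrage state relative to P. In particular, if the pool is frictionless, then τ(s, a*(s,P)) = s*(P). -/
/-- A liquidity pool: abstract state machine with states `S`, atomic actions `A`,
general actions `List A` (the free monoid on `A`), transition `tau`, payoff `pay`,
admissible sets `adm`, satisfying the liquidity pool axioms. -/
structure LiquidityPool (S A : Type*) where
  /-- admissible actions at each state -/
  adm : S → Set (List A)
  /-- transition function (a right monoid action of `List A` on `S`) -/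
  tau : S → List A → S
  /-- payoff function (a monoid homomorphism `List A → ℝ × ℝ`) -/
  pay : List A → ℝ × ℝ
  pay_nil : pay [] = 0
  pay_append : ∀ a b : List A, pay (a ++ b) = pay a + pay b
  tau_nil : ∀ s, tau s [] = s
  tau_append : ∀ s a b, tau s (a ++ b) = tau (tau s a) b
  /-- the null action -/
  bot : A
  bot_adm : ∀ s, [bot] ∈ adm s
  bot_tau : ∀ s, tau s [bot] = s
  bot_pay : pay [bot] = 0
  /-- composition axiom -/
  comp_adm : ∀ s a b, a ∈ adm s → b ∈ adm (tau s a) → a ++ b ∈ adm s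
  /-- optimal action axiom -/
  opt : ∀ (s : S) (P : ℝ), 0 < P → ∃ c : A, [c] ∈ adm s ∧
    ∀ a ∈ adm s, (pay a).1 * P + (pay a).2 ≤ (pay [c]).1 * P + (pay [c]).2

namespace LiquidityPool

variable {S A : Type*} (L : LiquidityPool S A)

/-- Mark-to-market value `Δx·P + Δy` of an action at price `P`. -/
def val (P : ℝ) (a : List A) : ℝ := (L.pay a).1 * P + (L.pay a).2

/-- `c` is an optimal (atomic) action at state `s` for price `P`. -/
def IsOpt (s : S) (P : ℝ) (c : A) : Prop :=
  [c] ∈ L.adm s ∧ ∀ a ∈ L.adm s, L.val P a ≤ L.val P [c]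

/-- `s` is a no-arbitrage state relative to price `P`. -/
def NoArb (s : S) (P : ℝ) : Prop := ∀ a ∈ L.adm s, L.val P a ≤ 0

/-- Frictionless: a unique no-arbitrage state for every price. -/
def Frictionless : Prop := ∀ P : ℝ, 0 < P → ∃! s : S, L.NoArb s P

/-- Efficient: every state is a no-arbitrage state relative to some price. -/
def Efficient : Prop := ∀ s : S, ∃ P : ℝ, 0 < P ∧ L.NoArb s P

/-- Path-independent: the payoff depends only on start and end states. -/
def PathIndep : Prop :=
  ∀ (s : S) (a a' : List A), L.tau s a = L.tau s a' → L.pay a = L.pay a'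

/-- Volume of an action: `|Δy|` for atomic actions, extended additively. -/
def vol (a : List A) : ℝ := (a.map fun c => |(L.pay [c]).2|).sum

/-- Value, after a proportional fee `φ` on volume, of an action at price `P`
(`pay` being the pre-fee payoff of the underlying pool). -/
def feeVal (φ P : ℝ) (a : List A) : ℝ :=
  (L.pay a).1 * P + ((L.pay a).2 - φ * L.vol a)

end LiquidityPool

/-- The state reached by applying an optimal action `a*(s,P)` is a
no-arbitrage state relative to `P`; in particular, for a frictionless pool it equals
the unique no-arbitrage state `s*(P)`. -/
theorem optimal_reaches_noArb {S A : Type*} (L : LiquidityPool S A)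
    (s : S) (P : ℝ) (hP : 0 < P) (c : A) (hc : L.IsOpt s P c) :
    L.NoArb (L.tau s [c]) P ∧
    ∀ sStar : ℝ → S, (∀ Q : ℝ, 0 < Q → L.NoArb (sStar Q) Q) →
      L.Frictionless → L.tau s [c] = sStar P := by
  have hNA : L.NoArb (L.tau s [c]) P := by
    intro a ha
    have hadm : [c] ++ a ∈ L.adm s := L.comp_adm s [c] a hc.1 ha
    have hle := hc.2 _ hadm
    have hval : L.val P ([c] ++ a) = L.val P [c] + L.val P a := by
      simp only [LiquidityPool.val, L.pay_append, Prod.fst_add, Prod.snd_add]; ring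
    rw [hval] at hle
    linarith
  refine ⟨hNA, fun sStar hStar hfric => ?_⟩
  obtain ⟨t, _, huniq⟩ := hfric P hP
  rw [huniq _ hNA, huniq _ (hStar P hP)]
end

section
/- If the pool is frictionless, then for every state s ∈ Σ and every price P > 0 there exists an atomic action a ∈ A_s ∩ A such that τ(s,a) = s*(P). -/
/-- In a frictionless pool, from every state `s` and for every price `P > 0`
there is an atomic admissible action taking `s` to the unique no-arbitrage state `s*(P)`. -/
theorem noArb_state_reachable {S A : Type*} (L : LiquidityPool S A)
    (hFr : L.Frictionless)
    (sStar : ℝ → S) (hsStar : ∀ Q : ℝ, 0 < Q → L.NoArb (sStar Q) Q)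
    (s : S) (P : ℝ) (hP : 0 < P) :
    ∃ a : A, [a] ∈ L.adm s ∧ L.tau s [a] = sStar P := by
  obtain ⟨c, hc, hopt⟩ := L.opt s P hP
  refine ⟨c, hc, ?_⟩
  have hNA : L.NoArb (L.tau s [c]) P := by
    intro b hb
    have hadm : [c] ++ b ∈ L.adm s := L.comp_adm s [c] b hc hb
    have := hopt ([c] ++ b) hadm
    have hpay := L.pay_append [c] b
    simp only [LiquidityPool.val] at *
    rw [hpay] at this
    simp only [Prod.fst_add, Prod.snd_add] at this
    nlinarith [this]
  obtain ⟨t, _, huniq⟩ := hFr P hP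
  have h1 := huniq _ hNA
  have h2 := huniq _ (hsStar P hP)
  rw [h1, h2]
end

section
/- Let s be a pool state and P > 0 a price, and suppose the optimal action a*(s,P) has payoff (Δx,Δy) with Δx·P + Δy > 0. Then the composition a*(s,P)a*(s,P) of the optimal action with itself is not admissible with respect to s, i.e. a*(s,P)a*(s,P) ∉ A_s. -/
/-- If an optimal action at `(s,P)` has strictly positive mark-to-market value,
then its composition with itself is not admissible with respect to `s`. -/
theorem optimal_selfComp_not_adm {S A : Type*} (L : LiquidityPool S A)
    (s : S) (P : ℝ) (hP : 0 < P) (c : A) (hc : L.IsOpt s P c)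
    (hpos : 0 < (L.pay [c]).1 * P + (L.pay [c]).2) :
    [c] ++ [c] ∉ L.adm s := by
  intro h
  have := hc.2 _ h
  simp only [LiquidityPool.val, L.pay_append, Prod.fst_add, Prod.snd_add] at this
  linarith
end

section
/- Let Π be an efficient, frictionless liquidity pool. Then for any two states s₁, s₂ ∈ Σ there exists an atomic action a ∈ A_{s₁} ∩ A such that τ(s₁, a) = s₂. -/
/-- In an efficient, frictionless pool, any state is reachable from any other
state by an atomic admissible action. -/
theorem efficient_reachable {S A : Type*} (L : LiquidityPool S A)
    (hEff : L.Efficient) (hFr : L.Frictionless)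
    (s₁ s₂ : S) :
    ∃ a : A, [a] ∈ L.adm s₁ ∧ L.tau s₁ [a] = s₂ := by
  obtain ⟨P, hP, hNA⟩ := hEff s₂
  obtain ⟨c, hc, hopt⟩ := L.opt s₁ P hP
  refine ⟨c, hc, ?_⟩
  obtain ⟨t, _, huniq⟩ := hFr P hP
  have h1 : L.NoArb (L.tau s₁ [c]) P := by
    intro b hb
    have hcb : [c] ++ b ∈ L.adm s₁ := L.comp_adm s₁ [c] b hc hb
    have := hopt _ hcb
    have hsum : L.pay ([c] ++ b) = L.pay [c] + L.pay b := L.pay_append _ _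
    simp only [LiquidityPool.val, hsum, Prod.fst_add, Prod.snd_add] at this ⊢
    linarith
  rw [huniq _ h1, huniq _ hNA]
end

section
/- Let Π be an efficient, frictionless liquidity pool, let P₀, P > 0 be prices, let s = s*(P₀), and let a ∈ A_s have payoff (Δx, Δy) with Δx·P + Δy > 0. Then P > P₀ if and only if Δy < 0, and P < P₀ if and only if Δy > 0. -/
/-- In an efficient, frictionless pool, a profitable admissible action
at the no-arbitrage state `s*(P₀)` relative to price `P` is a buy (`Δy < 0`) iff `P > P₀`,
and a sell (`Δy > 0`) iff `P < P₀`. -/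
theorem buy_sell_profitable {S A : Type*} (L : LiquidityPool S A)
    (hEff : L.Efficient) (hFr : L.Frictionless)
    (sStar : ℝ → S) (hsStar : ∀ Q : ℝ, 0 < Q → L.NoArb (sStar Q) Q)
    (P₀ P : ℝ) (hP₀ : 0 < P₀) (hP : 0 < P)
    (s : S) (hs : s = sStar P₀)
    (a : List A) (ha : a ∈ L.adm s)
    (hpos : 0 < (L.pay a).1 * P + (L.pay a).2) :
    (P > P₀ ↔ (L.pay a).2 < 0) ∧ (P < P₀ ↔ 0 < (L.pay a).2) := by
  have h0 : (L.pay a).1 * P₀ + (L.pay a).2 ≤ 0 := by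
    have := hsStar P₀ hP₀ a (hs ▸ ha)
    simpa [LiquidityPool.val] using this
  set x := (L.pay a).1
  set y := (L.pay a).2
  constructor
  · constructor
    · intro h; nlinarith
    · intro hy
      rcases lt_trichotomy P P₀ with h | h | h
      · nlinarith
      · nlinarith
      · exact h
  · constructor
    · intro h; nlinarith
    · intro hy
      rcases lt_trichotomy P P₀ with h | h | h
      · exact h
      · nlinarith
      · nlinarith
end

section
/- Let Π have fee φ relative to an efficient, frictionless pool Π₀ with no-arbitrage states s*(·), let P₀, P > 0 be prices, and let s = s*(P₀). Then there exists an atomic action a ∈ A_s ∩ A whose payoff (Δx, Δy) under π₀ maximizes Δx·P + Δy − φ|Δy| over all admissible actions at s, such that: if P > P₀(1+φ) then τ(s,a) = s*(P/(1+φ)); if P < P₀(1−φ) then τ(s,a) = s*(P/(1−φ)); and otherwise τ(s,a) = s. -/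

lemma LiquidityPool.opt_dest {S A : Type*} (L : LiquidityPool S A)
    (hFr : L.Frictionless) (sStar : ℝ → S)
    (hsStar : ∀ Q : ℝ, 0 < Q → L.NoArb (sStar Q) Q)
    (s : S) (Q : ℝ) (hQ : 0 < Q) (c : A) (hc : [c] ∈ L.adm s)
    (hopt : ∀ a ∈ L.adm s, L.val Q a ≤ L.val Q [c]) :
    L.tau s [c] = sStar Q := by
  obtain ⟨t, _, huniq⟩ := hFr Q hQ
  have h1 : L.NoArb (L.tau s [c]) Q := by
    intro b hb
    have hcb := L.comp_adm s [c] b hc hb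
    have h2 := hopt _ hcb
    have h3 : L.val Q ([c] ++ b) = L.val Q [c] + L.val Q b := by
      simp only [LiquidityPool.val, L.pay_append, Prod.fst_add, Prod.snd_add]
      ring
    rw [h3] at h2; linarith
  rw [huniq _ h1, huniq _ (hsStar Q hQ)]

/-- For a pool with fee `φ` relative to an efficient, frictionless pool `L`
(with payoff `L.pay = π₀` and no-arbitrage states `sStar`), at the state `s = s*(P₀)` and
external price `P`, there is an atomic admissible action whose `π₀`-payoff maximizes
`Δx·P + Δy − φ|Δy|` over all admissible actions at `s`, and which moves the pool to
`s*(P/(1+φ))` if `P > P₀(1+φ)`, to `s*(P/(1−φ))` if `P < P₀(1−φ)`, and leaves the pool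
at `s` otherwise. -/
theorem fee_optimal_destination {S A : Type*} (L : LiquidityPool S A)
    (φ : ℝ) (hφ : 0 < φ)
    (hEff : L.Efficient) (hFr : L.Frictionless)
    (sStar : ℝ → S) (hsStar : ∀ Q : ℝ, 0 < Q → L.NoArb (sStar Q) Q)
    (P₀ P : ℝ) (hP₀ : 0 < P₀) (hP : 0 < P)
    (s : S) (hs : s = sStar P₀) :
    ∃ c : A, [c] ∈ L.adm s ∧
      (∀ b ∈ L.adm s,
        (L.pay b).1 * P + (L.pay b).2 - φ * |(L.pay b).2|
          ≤ (L.pay [c]).1 * P + (L.pay [c]).2 - φ * |(L.pay [c]).2|) ∧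
      (P₀ * (1 + φ) < P → L.tau s [c] = sStar (P / (1 + φ))) ∧
      (P < P₀ * (1 - φ) → L.tau s [c] = sStar (P / (1 - φ))) ∧
      (P₀ * (1 - φ) ≤ P → P ≤ P₀ * (1 + φ) → L.tau s [c] = s) := by
  subst hs
  have hNA : L.NoArb (sStar P₀) P₀ := hsStar P₀ hP₀
  have h1φ : (0:ℝ) < 1 + φ := by linarith
  by_cases hhi : P₀ * (1 + φ) < P
  · -- high price: trade to s*(P/(1+φ))
    set Q := P / (1 + φ) with hQdef
    have hQ : 0 < Q := div_pos hP h1φ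
    have hPQ : P = (1 + φ) * Q := by rw [hQdef, mul_div_assoc', mul_div_cancel_left₀ _ h1φ.ne']
    have hQP₀ : P₀ < Q := by rw [lt_div_iff₀ h1φ]; linarith
    obtain ⟨c, hc, hopt⟩ := L.opt (sStar P₀) Q hQ
    have hv0' : 0 ≤ (L.pay [c]).1 * Q + (L.pay [c]).2 := by
      have h := hopt _ (L.bot_adm _); rw [L.bot_pay] at h; simpa using h
    have hvP₀' : (L.pay [c]).1 * P₀ + (L.pay [c]).2 ≤ 0 := hNA _ hc
    have hx : 0 ≤ (L.pay [c]).1 := by nlinarith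
    have hy : (L.pay [c]).2 ≤ 0 := by nlinarith
    refine ⟨c, hc, ?_, fun _ => L.opt_dest hFr sStar hsStar _ Q hQ c hc hopt,
      ?_, ?_⟩
    · intro b hb
      have hvb : (L.pay b).1 * Q + (L.pay b).2
          ≤ (L.pay [c]).1 * Q + (L.pay [c]).2 := hopt b hb
      have habs : -|(L.pay b).2| ≤ (L.pay b).2 := neg_abs_le _
      have hyabs : |(L.pay [c]).2| = -(L.pay [c]).2 := abs_of_nonpos hy
      rw [hyabs, hPQ]
      nlinarith [mul_le_mul_of_nonneg_left hvb h1φ.le,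
        mul_le_mul_of_nonneg_left habs hφ.le]
    · intro h; exfalso; nlinarith
    · intro _ h; exfalso; linarith
  · by_cases hlo : P < P₀ * (1 - φ)
    · -- low price: trade to s*(P/(1-φ))
      have h1mφ : (0:ℝ) < 1 - φ := by nlinarith
      set Q := P / (1 - φ) with hQdef
      have hQ : 0 < Q := div_pos hP h1mφ
      have hPQ : P = (1 - φ) * Q := by rw [hQdef, mul_div_assoc', mul_div_cancel_left₀ _ h1mφ.ne']
      have hQP₀ : Q < P₀ := by rw [div_lt_iff₀ h1mφ]; linarith
      obtain ⟨c, hc, hopt⟩ := L.opt (sStar P₀) Q hQ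
      have hv0' : 0 ≤ (L.pay [c]).1 * Q + (L.pay [c]).2 := by
        have h := hopt _ (L.bot_adm _); rw [L.bot_pay] at h; simpa using h
      have hvP₀' : (L.pay [c]).1 * P₀ + (L.pay [c]).2 ≤ 0 := hNA _ hc
      have hx : (L.pay [c]).1 ≤ 0 := by nlinarith
      have hy : 0 ≤ (L.pay [c]).2 := by nlinarith
      refine ⟨c, hc, ?_, ?_, fun _ => L.opt_dest hFr sStar hsStar _ Q hQ c hc hopt,
        ?_⟩
      · intro b hb
        have hvb : (L.pay b).1 * Q + (L.pay b).2
            ≤ (L.pay [c]).1 * Q + (L.pay [c]).2 := hopt b hb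
        have habs : (L.pay b).2 ≤ |(L.pay b).2| := le_abs_self _
        have hyabs : |(L.pay [c]).2| = (L.pay [c]).2 := abs_of_nonneg hy
        rw [hyabs, hPQ]
        nlinarith [mul_le_mul_of_nonneg_left hvb h1mφ.le,
          mul_le_mul_of_nonneg_left habs hφ.le]
      · intro h; exfalso; nlinarith
      · intro h; exfalso; linarith
    · -- middle band: null action
      push_neg at hhi hlo
      refine ⟨L.bot, L.bot_adm _, ?_, ?_, ?_, fun _ _ => L.bot_tau _⟩
      · intro b hb
        have hb' : (L.pay b).1 * P₀ + (L.pay b).2 ≤ 0 := hNA b hb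
        rw [L.bot_pay]
        simp only [Prod.fst_zero, Prod.snd_zero, abs_zero]
        rcases le_or_gt 0 (L.pay b).1 with hxb | hxb
        · have h1 : 0 ≤ (L.pay b).1 * (P₀ * (1 + φ) - P) :=
            mul_nonneg hxb (by linarith)
          have h2 : φ * ((L.pay b).1 * P₀ + (L.pay b).2) ≤ 0 :=
            mul_nonpos_of_nonneg_of_nonpos hφ.le hb'
          have h3 : φ * (-(L.pay b).2) ≤ φ * |(L.pay b).2| :=
            mul_le_mul_of_nonneg_left (neg_le_abs _) hφ.le
          nlinarith
        · rcases le_or_gt 1 φ with hφ1 | hφ1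
          · have h1 : (L.pay b).2 ≤ |(L.pay b).2| := le_abs_self _
            have h2 : 1 * |(L.pay b).2| ≤ φ * |(L.pay b).2| :=
              mul_le_mul_of_nonneg_right hφ1 (abs_nonneg _)
            have h3 : (L.pay b).1 * P ≤ 0 :=
              (mul_neg_of_neg_of_pos hxb hP).le
            nlinarith
          · have h2 : (1 - φ) * ((L.pay b).1 * P₀ + (L.pay b).2) ≤ 0 :=
              mul_nonpos_of_nonneg_of_nonpos (by linarith) hb'
            have h3 : φ * (L.pay b).2 ≤ φ * |(L.pay b).2| :=
              mul_le_mul_of_nonneg_left (le_abs_self _) hφ.le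
            have h4 : (L.pay b).1 * (P - P₀ * (1 - φ)) ≤ 0 :=
              mul_nonpos_of_nonpos_of_nonneg hxb.le (by linarith)
            nlinarith
      · intro h; exfalso; linarith
      · intro h; exfalso; linarith
end

section
/- Let Π have fee φ relative to an efficient, frictionless pool Π₀. Then Π satisfies the optimal action axiom: for every state s and price P > 0 there exists an atomic action a* ∈ A_s ∩ A such that for every a ∈ A_s, if π(a) = (Δx,Δy) and π(a*) = (Δx*,Δy*) (payoffs of Π, with fees), then ΔxP + Δy ≤ Δx*P + Δy*. -/
namespace LiquidityPool

variable {S A : Type*} (L : LiquidityPool S A)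

lemma pay_cons (c : A) (t : List A) : L.pay (c :: t) = L.pay [c] + L.pay t := by
  simpa using L.pay_append [c] t

lemma vol_single (c : A) : L.vol [c] = |(L.pay [c]).2| := by
  simp [vol]

lemma abs_snd_le_vol (a : List A) : |(L.pay a).2| ≤ L.vol a := by
  induction a with
  | nil => simp [vol, L.pay_nil]
  | cons c t ih =>
    have h := L.pay_cons c t
    have hv : L.vol (c :: t) = |(L.pay [c]).2| + L.vol t := by simp [vol]
    rw [hv, h]
    calc |(L.pay [c] + L.pay t).2| ≤ |(L.pay [c]).2| + |(L.pay t).2| := by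
          simpa using abs_add_le (L.pay [c]).2 (L.pay t).2
    _ ≤ _ := by linarith

end LiquidityPool

/-- A pool with fee `φ` relative to an efficient, frictionless pool `L`
(fee payoff `π(a) = (Δx, Δy − φ|a|)` where `π₀(a) = (Δx,Δy)` is `L.pay` and `|a|` the volume)
satisfies the optimal action axiom: at every state `s` and price `P > 0` there is an atomic
admissible action maximizing the fee payoff value over all admissible actions. -/
theorem fee_optimal_action_axiom {S A : Type*} (L : LiquidityPool S A)
    (φ : ℝ) (hφ : 0 < φ)
    (hEff : L.Efficient) (hFr : L.Frictionless)
    (s : S) (P : ℝ) (hP : 0 < P) :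
    ∃ c : A, [c] ∈ L.adm s ∧
      ∀ a ∈ L.adm s,
        (L.pay a).1 * P + ((L.pay a).2 - φ * L.vol a)
          ≤ (L.pay [c]).1 * P + ((L.pay [c]).2 - φ * L.vol [c]) := by
  obtain ⟨P₀, hP₀, hNA⟩ := hEff s
  by_cases h1 : (1 + φ) * P₀ < P
  · -- optimal atom at price P/(1+φ)
    have hone : (0:ℝ) < 1 + φ := by linarith
    have hQpos : 0 < P / (1 + φ) := by positivity
    obtain ⟨c, hc, hopt⟩ := L.opt s (P / (1 + φ)) hQpos
    refine ⟨c, hc, fun a ha => ?_⟩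
    have hna := hNA [c] hc
    have hbot := hopt [L.bot] (L.bot_adm s)
    rw [L.bot_pay] at hbot
    simp only [Prod.fst_zero, Prod.snd_zero, zero_mul, add_zero, zero_add] at hbot
    set x := (L.pay [c]).1 with hx
    set y := (L.pay [c]).2 with hy
    unfold LiquidityPool.val at hna
    have hQgt : P₀ < P / (1 + φ) := by
      rw [lt_div_iff₀ hone]; linarith [mul_comm P₀ (1 + φ)]
    have hxnn : 0 ≤ x := by
      by_contra hneg
      push_neg at hneg
      have := mul_lt_mul_of_neg_left hQgt hneg
      linarith
    have hynp : y ≤ 0 := by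
      have := mul_nonneg hxnn hP₀.le
      linarith
    have hvolc : L.vol [c] = -y := by rw [L.vol_single, ← hy, abs_of_nonpos hynp]
    have hva := L.abs_snd_le_vol a
    have hoa := hopt a ha
    have hPQ : (1 + φ) * (P / (1 + φ)) = P := by field_simp
    have e : ∀ u v : ℝ, (1 + φ) * (u * (P / (1 + φ)) + v) = u * P + (1 + φ) * v := by
      intro u v
      rw [mul_add, ← mul_assoc, mul_comm (1 + φ) u, mul_assoc, hPQ]
    have key : (L.pay a).1 * P + (1 + φ) * (L.pay a).2 ≤ x * P + (1 + φ) * y := by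
      rw [← e, ← e]
      exact mul_le_mul_of_nonneg_left hoa hone.le
    rw [hvolc]
    have h3 := mul_le_mul_of_nonneg_left hva hφ.le
    have h4 := mul_le_mul_of_nonneg_left (neg_abs_le (L.pay a).2) hφ.le
    nlinarith [key, h3, h4]
  · by_cases h2 : φ < 1 ∧ P < (1 - φ) * P₀
    · obtain ⟨hφ1, h2'⟩ := h2
      have hone : (0:ℝ) < 1 - φ := by linarith
      have hQpos : 0 < P / (1 - φ) := div_pos hP hone
      obtain ⟨c, hc, hopt⟩ := L.opt s (P / (1 - φ)) hQpos
      refine ⟨c, hc, fun a ha => ?_⟩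
      have hna := hNA [c] hc
      have hbot := hopt [L.bot] (L.bot_adm s)
      rw [L.bot_pay] at hbot
      simp only [Prod.fst_zero, Prod.snd_zero, zero_mul, add_zero, zero_add] at hbot
      set x := (L.pay [c]).1 with hx
      set y := (L.pay [c]).2 with hy
      unfold LiquidityPool.val at hna
      have hQlt : P / (1 - φ) < P₀ := by
        rw [div_lt_iff₀ hone]; nlinarith
      have hxnp : x ≤ 0 := by
        by_contra hneg
        push_neg at hneg
        have := mul_lt_mul_of_pos_left hQlt hneg
        linarith
      have hynn : 0 ≤ y := by
        nlinarith [mul_nonneg (neg_nonneg.mpr hxnp) hQpos.le]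
      have hvolc : L.vol [c] = y := by rw [L.vol_single, ← hy, abs_of_nonneg hynn]
      have hva := L.abs_snd_le_vol a
      have hoa := hopt a ha
      have hPQ : (1 - φ) * (P / (1 - φ)) = P := by field_simp
      have e : ∀ u v : ℝ, (1 - φ) * (u * (P / (1 - φ)) + v) = u * P + (1 - φ) * v := by
        intro u v
        rw [mul_add, ← mul_assoc, mul_comm (1 - φ) u, mul_assoc, hPQ]
      have key : (L.pay a).1 * P + (1 - φ) * (L.pay a).2 ≤ x * P + (1 - φ) * y := by
        rw [← e, ← e]
        exact mul_le_mul_of_nonneg_left hoa hone.le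
      rw [hvolc]
      have h3 := mul_le_mul_of_nonneg_left hva hφ.le
      have h4 := mul_le_mul_of_nonneg_left (le_abs_self (L.pay a).2) hφ.le
      nlinarith [key, h3, h4]
    · -- null action is optimal
      refine ⟨L.bot, L.bot_adm s, fun a ha => ?_⟩
      have hbp := L.bot_pay
      have hvolb : L.vol [L.bot] = 0 := by
        rw [L.vol_single, hbp]; simp
      rw [hbp, hvolb]
      simp only [Prod.fst_zero, Prod.snd_zero, zero_mul, add_zero, mul_zero, sub_zero]
      have hna := hNA a ha
      unfold LiquidityPool.val at hna
      have hva := L.abs_snd_le_vol a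
      set x := (L.pay a).1
      set y := (L.pay a).2
      have h1' : P ≤ (1 + φ) * P₀ := not_lt.mp h1
      have h3 := mul_le_mul_of_nonneg_left hva hφ.le
      rcases le_or_gt 0 x with hxnn | hxneg
      · have h5 : φ * (x * P₀ + y) ≤ 0 := mul_nonpos_of_nonneg_of_nonpos hφ.le hna
        have h6 := mul_le_mul_of_nonneg_left h1' hxnn
        have h4 := mul_le_mul_of_nonneg_left (neg_abs_le y) hφ.le
        nlinarith [h5, h6, h4]
      · rcases le_or_gt 1 φ with hφ1 | hφ1
        · have h6 := mul_neg_of_neg_of_pos hxneg hP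
          have h7 := mul_le_mul_of_nonneg_right hφ1 (abs_nonneg y)
          nlinarith [h6, h7, le_abs_self y, h3]
        · have hP2 : (1 - φ) * P₀ ≤ P := by
            by_contra hq
            push_neg at hq
            exact h2 ⟨hφ1, hq⟩
          have h5 : (1 - φ) * (x * P₀ + y) ≤ 0 :=
            mul_nonpos_of_nonneg_of_nonpos (by linarith) hna
          have h6 := mul_le_mul_of_nonpos_left hP2 hxneg.le
          have h4 := mul_le_mul_of_nonneg_left (le_abs_self y) hφ.le
          nlinarith [h5, h6, h4, h3]
end

section
/- Let Π be an efficient, frictionless, path-independent liquidity pool. Then there exists a nondecreasing function q : ℝ₊ → ℝ (a potential function on prices) such that for every pair of prices P₁, P₂ > 0 and every a ∈ A_{s*(P₁)} with payoff (Δx, Δy): if τ(s*(P₁), a) = s*(P₂) then q(P₁) − q(P₂) = Δy. -/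
/-- An efficient, frictionless, path-independent pool admits a nondecreasing
potential function `q` on prices such that whenever an admissible action moves the pool
from `s*(P₁)` to `s*(P₂)`, its payoff satisfies `q(P₁) − q(P₂) = Δy`. -/
theorem exists_potential_function {S A : Type*} (L : LiquidityPool S A)
    (hEff : L.Efficient) (hFr : L.Frictionless) (hPI : L.PathIndep)
    (sStar : ℝ → S) (hsStar : ∀ Q : ℝ, 0 < Q → L.NoArb (sStar Q) Q) :
    ∃ q : ℝ → ℝ, MonotoneOn q (Set.Ioi (0 : ℝ)) ∧
      ∀ P₁ P₂ : ℝ, 0 < P₁ → 0 < P₂ →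
        ∀ a ∈ L.adm (sStar P₁), L.tau (sStar P₁) a = sStar P₂ →
          q P₁ - q P₂ = (L.pay a).2 := by
  classical
  -- From any state one can reach `sStar P` by an admissible action.
  have reach : ∀ (s : S) (P : ℝ) (hP : 0 < P),
      ∃ a : List A, a ∈ L.adm s ∧ L.tau s a = sStar P := by
    intro s P hP
    obtain ⟨c, hc, hopt⟩ := L.opt s P hP
    refine ⟨[c], hc, ?_⟩
    have hNA : L.NoArb (L.tau s [c]) P := by
      intro a ha
      have hcomp := L.comp_adm s [c] a hc ha
      have h1 := hopt _ hcomp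
      have h2 := L.pay_append [c] a
      simp only [LiquidityPool.val, h2, Prod.fst_add, Prod.snd_add] at h1 ⊢
      linarith
    obtain ⟨s0, _, huniq⟩ := hFr P hP
    rw [huniq _ hNA, huniq _ (hsStar P hP)]
  -- Loops have zero payoff (path independence).
  have loop : ∀ (s : S) (a : List A), L.tau s a = s → L.pay a = 0 := by
    intro s a h
    have := hPI s a [] (by rw [h, L.tau_nil])
    rw [this, L.pay_nil]
  set q : ℝ → ℝ := fun P =>
    if h : 0 < P then -(L.pay (reach (sStar 1) P h).choose).2 else 0 with hq
  have key : ∀ (P₁ P₂ : ℝ) (h₁ : 0 < P₁) (h₂ : 0 < P₂),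
      ∀ a ∈ L.adm (sStar P₁), L.tau (sStar P₁) a = sStar P₂ →
        q P₁ - q P₂ = (L.pay a).2 := by
    intro P₁ P₂ h₁ h₂ a ha hta
    obtain ⟨hb₁, hb₁t⟩ := (reach (sStar 1) P₁ h₁).choose_spec
    obtain ⟨hb₂, hb₂t⟩ := (reach (sStar 1) P₂ h₂).choose_spec
    set b₁ := (reach (sStar 1) P₁ h₁).choose
    set b₂ := (reach (sStar 1) P₂ h₂).choose
    have htt : L.tau (sStar 1) (b₁ ++ a) = L.tau (sStar 1) b₂ := by
      rw [L.tau_append, hb₁t, hta, hb₂t]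
    have hpay := hPI (sStar 1) (b₁ ++ a) b₂ htt
    rw [L.pay_append] at hpay
    have h2 : (L.pay b₁).2 + (L.pay a).2 = (L.pay b₂).2 := by
      rw [← Prod.snd_add, hpay]
    simp only [hq, dif_pos h₁, dif_pos h₂]
    linarith
  refine ⟨q, ?_, fun P₁ P₂ h₁ h₂ a ha hta => key P₁ P₂ h₁ h₂ a ha hta⟩
  intro P₁ hP₁ P₂ hP₂ hle
  simp only [Set.mem_Ioi] at hP₁ hP₂
  rcases eq_or_lt_of_le hle with rfl | hlt
  · exact le_refl _
  obtain ⟨a, ha, hta⟩ := reach (sStar P₁) P₂ hP₂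
  obtain ⟨a', ha', hta'⟩ := reach (sStar P₂) P₁ hP₁
  have hloop : L.pay (a ++ a') = 0 := by
    apply loop
    rw [L.tau_append, hta, hta']
  rw [L.pay_append] at hloop
  have hneg : L.pay a' = -L.pay a := by
    have := neg_eq_of_add_eq_zero_right hloop
    rw [← this]
  have h1 : L.val P₁ a ≤ 0 := hsStar P₁ hP₁ a ha
  have h2 : L.val P₂ a' ≤ 0 := hsStar P₂ hP₂ a' ha'
  simp only [LiquidityPool.val, hneg, Prod.fst_neg, Prod.snd_neg] at h1 h2
  have hkey := key P₁ P₂ hP₁ hP₂ a ha hta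
  have hy : (L.pay a).2 ≤ 0 := by nlinarith
  linarith
end

section
/- Let Π₁ and Π₂ be liquidity pools satisfying the liquidity pool axioms. If Π₁ and Π₂ are both frictionless, then their product Π₁ × Π₂ is frictionless, with unique no-arbitrage state s*(P) = (s₁*(P), s₂*(P)) for every price P > 0. -/
lemma botrep_tau {S A : Type*} (L : LiquidityPool S A) (s : S) :
    ∀ n : ℕ, L.tau s (List.replicate n L.bot) = s := by
  intro n
  induction n with
  | zero => simp [L.tau_nil]
  | succ n ih =>
      rw [List.replicate_succ', L.tau_append, ih, L.bot_tau]

lemma botrep_pay {S A : Type*} (L : LiquidityPool S A) :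
    ∀ n : ℕ, L.pay (List.replicate n L.bot) = 0 := by
  intro n
  induction n with
  | zero => simp [L.pay_nil]
  | succ n ih =>
      rw [List.replicate_succ', L.pay_append, ih, L.bot_pay, add_zero]

lemma botrep_adm {S A : Type*} (L : LiquidityPool S A) (s : S) :
    ∀ n : ℕ, List.replicate (n + 1) L.bot ∈ L.adm s := by
  intro n
  induction n with
  | zero => simpa using L.bot_adm s
  | succ n ih =>
      have := L.comp_adm s (List.replicate (n + 1) L.bot) [L.bot] ih
        (by rw [botrep_tau]; exact L.bot_adm s)
      rw [← List.replicate_succ'] at this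
      exact this

/-- If `L₁` and `L₂` are frictionless (with no-arbitrage states `sStar₁`,
`sStar₂`), then their product is frictionless, the unique no-arbitrage state for a price
`P > 0` being the pair `(sStar₁ P, sStar₂ P)`. No-arbitrage for the product is stated
directly on the product data: a product action (a word over `A₁ × A₂`) is admissible iff
both projections are, and its payoff is the sum of the projections' payoffs. -/
theorem product_frictionless {S₁ A₁ S₂ A₂ : Type*}
    (L₁ : LiquidityPool S₁ A₁) (L₂ : LiquidityPool S₂ A₂)
    (hFr₁ : L₁.Frictionless) (hFr₂ : L₂.Frictionless)
    (sStar₁ : ℝ → S₁) (hsStar₁ : ∀ Q : ℝ, 0 < Q → L₁.NoArb (sStar₁ Q) Q)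
    (sStar₂ : ℝ → S₂) (hsStar₂ : ∀ Q : ℝ, 0 < Q → L₂.NoArb (sStar₂ Q) Q) :
    ∀ P : ℝ, 0 < P → ∀ p : S₁ × S₂,
      ((∀ l : List (A₁ × A₂),
          l.map Prod.fst ∈ L₁.adm p.1 → l.map Prod.snd ∈ L₂.adm p.2 →
            (L₁.pay (l.map Prod.fst) + L₂.pay (l.map Prod.snd)).1 * P
              + (L₁.pay (l.map Prod.fst) + L₂.pay (l.map Prod.snd)).2 ≤ 0)
        ↔ p = (sStar₁ P, sStar₂ P)) := by
  intro P hP p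
  constructor
  · intro h
    have hna1 : L₁.NoArb p.1 P := by
      intro a ha
      rcases a with _ | ⟨c, t⟩
      · simp [LiquidityPool.val, L₁.pay_nil]
      · set a := c :: t with ha'
        have key := h (a.map fun x => (x, L₂.bot))
        have h1 : (a.map fun x => (x, L₂.bot)).map Prod.fst = a := by
          simp [List.map_map, Function.comp_def]
        have h2 : (a.map fun x => (x, L₂.bot)).map Prod.snd
            = List.replicate a.length L₂.bot := by
          simp [List.map_map, Function.comp_def, List.map_const']
        rw [h1, h2, botrep_pay] at key
        have := key ha (by
          rw [ha']
          simp only [List.length_cons]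
          exact botrep_adm L₂ p.2 t.length)
        simpa [LiquidityPool.val] using this
    have hna2 : L₂.NoArb p.2 P := by
      intro a ha
      rcases a with _ | ⟨c, t⟩
      · simp [LiquidityPool.val, L₂.pay_nil]
      · set a := c :: t with ha'
        have key := h (a.map fun x => (L₁.bot, x))
        have h1 : (a.map fun x => (L₁.bot, x)).map Prod.snd = a := by
          simp [List.map_map, Function.comp_def]
        have h2 : (a.map fun x => (L₁.bot, x)).map Prod.fst
            = List.replicate a.length L₁.bot := by
          simp [List.map_map, Function.comp_def, List.map_const']
        rw [h1, h2, botrep_pay] at key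
        have := key (by
          rw [ha']
          simp only [List.length_cons]
          exact botrep_adm L₁ p.1 t.length) ha
        simpa [LiquidityPool.val] using this
    obtain ⟨s₁, _, hu₁⟩ := hFr₁ P hP
    obtain ⟨s₂, _, hu₂⟩ := hFr₂ P hP
    have e1 : p.1 = sStar₁ P := (hu₁ p.1 hna1).trans (hu₁ _ (hsStar₁ P hP)).symm
    have e2 : p.2 = sStar₂ P := (hu₂ p.2 hna2).trans (hu₂ _ (hsStar₂ P hP)).symm
    exact Prod.ext e1 e2
  · rintro rfl
    intro l h1 h2
    have v1 := hsStar₁ P hP _ h1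
    have v2 := hsStar₂ P hP _ h2
    simp only [LiquidityPool.val] at v1 v2
    simp only [Prod.fst_add, Prod.snd_add]
    nlinarith
end

section
/- Let L > 0 and let x, y > 0 satisfy xy = L, and let P > 0. Then the following are equivalent: (i) for all real Δx, Δy with x − Δx > 0, y − Δy > 0 and (x − Δx)(y − Δy) = L, one has Δx·P + Δy ≤ 0; (ii) y = P·x. In other words, a state (x,y) of the constant product market maker with invariant xy = L is a no-arbitrage state relative to the external price P if and only if y/x = P. -/
/-- A state `(x,y)` of the constant product market maker with invariant
`x·y = L` is a no-arbitrage state relative to the external price `P` (every admissible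
trade `(Δx,Δy)` — one keeping the post-trade reserves positive and on the curve —
satisfies `Δx·P + Δy ≤ 0`) if and only if `y = P·x`. -/
theorem cpmm_noArb_iff (L x y P : ℝ) (hL : 0 < L) (hx : 0 < x) (hy : 0 < y)
    (hxy : x * y = L) (hP : 0 < P) :
    (∀ dx dy : ℝ, 0 < x - dx → 0 < y - dy → (x - dx) * (y - dy) = L →
        dx * P + dy ≤ 0) ↔ y = P * x := by
  constructor
  · intro h
    by_contra hne
    set x' : ℝ := (x + y / P) / 2 with hx'def
    have hx'pos : 0 < x' := by positivity
    have h1 : 0 < x - (x - x') := by simpa using hx'pos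
    have h2 : 0 < y - (y - L / x') := by
      simp only [sub_sub_cancel]
      positivity
    have h3 : (x - (x - x')) * (y - (y - L / x')) = L := by
      field_simp
      ring
    have hle := h (x - x') (y - L / x') h1 h2 h3
    rw [← hxy] at hle
    have key : ((x - x') * P + (y - x * y / x')) * x' = (y - P * x) ^ 2 / (4 * P) := by
      rw [hx'def]
      field_simp
      ring
    have ht : 0 < (y - P * x) ^ 2 / (4 * P) := by
      have : y - P * x ≠ 0 := sub_ne_zero.mpr hne
      positivity
    nlinarith [mul_nonpos_of_nonpos_of_nonneg hle hx'pos.le]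
  · intro hyPx dx dy h1 h2 h3
    rw [← hxy, hyPx] at h3
    have key : (dx * P + dy) * (x - dx) = -(P * dx ^ 2) := by nlinarith [h3]
    nlinarith [sq_nonneg dx, mul_pos hP (mul_pos hx hx)]
end

section
/- Let L > 0 and P > 0. Then there exists exactly one state (x,y) of the constant product market maker with invariant xy = L (i.e. x, y > 0 and xy = L) that is a no-arbitrage state relative to P, namely x = √(L/P) and y = √(LP). Hence the constant product market maker is frictionless. -/
/-- The constant product market maker with invariant `x·y = L` has exactly
one no-arbitrage state relative to a price `P > 0`, namely `x = √(L/P)`, `y = √(L·P)`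
(hence the constant product market maker is frictionless). Stated as: a pair `(x,y)` is a
positive on-curve no-arbitrage state iff it equals `(√(L/P), √(L·P))`. -/
theorem cpmm_frictionless (L P : ℝ) (hL : 0 < L) (hP : 0 < P) :
    ∀ x y : ℝ,
      (0 < x ∧ 0 < y ∧ x * y = L ∧
        ∀ dx dy : ℝ, 0 < x - dx → 0 < y - dy → (x - dx) * (y - dy) = L →
          dx * P + dy ≤ 0)
      ↔ (x = Real.sqrt (L / P) ∧ y = Real.sqrt (L * P)) := by
  set t := Real.sqrt (L / P) with ht
  set s := Real.sqrt (L * P) with hs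
  have htpos : 0 < t := Real.sqrt_pos.mpr (div_pos hL hP)
  have hspos : 0 < s := Real.sqrt_pos.mpr (mul_pos hL hP)
  have ht2 : t ^ 2 = L / P := Real.sq_sqrt (div_pos hL hP).le
  have hs2 : s ^ 2 = L * P := Real.sq_sqrt (mul_pos hL hP).le
  have hts : t * s = L := by
    have : (t * s) ^ 2 = L ^ 2 := by
      rw [mul_pow, ht2, hs2]; field_simp
    nlinarith [mul_pos htpos hspos]
  have htP : t * P = s := by
    have : t * (t * P) = t * s := by
      rw [hts]; nlinarith
    exact mul_left_cancel₀ htpos.ne' this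
  intro x y
  constructor
  · rintro ⟨hx, hy, hxy, harb⟩
    -- apply no-arbitrage to the trade moving to (t, s)
    have hys : t * (L / t) = L := by field_simp
    have key := harb (x - t) (y - L / t) (by simpa using htpos)
      (by simpa using div_pos hL htpos) (by simpa using hys)
    have hLt : L / t = s := by
      field_simp; linear_combination -hts
    rw [hLt] at key
    -- key : (x - t) * P + (y - s) ≤ 0, i.e. x*P + y ≤ t*P + s = 2s
    have h2 : x * P + y ≤ 2 * s := by nlinarith
    have heq : x * P = y := by
      nlinarith [sq_nonneg (x * P - y), sq_nonneg (x * P + y), mul_pos hx hP]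
    have hx2 : x ^ 2 = t ^ 2 := by
      rw [ht2]
      have : x * (x * P) = L := by rw [heq, hxy]
      field_simp; nlinarith
    have hxt : x = t := by nlinarith
    exact ⟨hxt, by rw [← heq, hxt, htP]⟩
  · rintro ⟨hxt, hys⟩
    subst hxt; subst hys
    refine ⟨htpos, hspos, hts, ?_⟩
    intro dx dy hx' hy' hcurve
    set a := t - dx with ha
    set b := s - dy with hb
    -- a*P + b ≥ 2s since (a*P)*b = L*P = s²
    have habP : (a * P) * b = s ^ 2 := by rw [hs2]; nlinarith
    have hsum : 0 < a * P + b := by positivity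
    have hge : a * P + b ≥ 2 * s := by
      nlinarith [sq_nonneg (a * P - b), habP, hsum, mul_pos hspos hsum]
    have : dx * P + dy = 2 * s - (a * P + b) := by
      rw [ha, hb, ← htP]; ring
    linarith
end

section
/- Let (Ω, F, (Fᵢ)_{i=0,…,n}, μ) be a filtered probability space and let (Pᵢ)_{i=0,…,n} be a real-valued martingale with respect to (Fᵢ). For 1 ≤ i ≤ n let Δxᵢ, Δyᵢ : Ω → ℝ be Fᵢ-measurable with each Δxᵢ bounded and each Δyᵢ integrable, and let φ ≥ 0. Then E[∑_{i=1}^n (Δxᵢ·Pᵢ + Δyᵢ) − φ·∑_{i=1}^n |Δyᵢ|] ≤ E[(∑_{i=1}^n Δxᵢ)·Pₙ + ∑_{i=1}^n Δyᵢ − φ·|∑_{i=1}^n Δyᵢ|]. (This is the probabilistic core of the lemma that, with a proportional fee φ on volume and a martingale price, a strategy trading on every block cannot outperform in expectation the strategy that waits and executes the composite trade at block n.) -/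
open MeasureTheory

/-- If `(P i)` is a martingale for the filtration `ℱ` and, for `1 ≤ i ≤ n`,
`X i` and `Y i` are `ℱ i`-measurable with `X i` bounded and `Y i` integrable, and `φ ≥ 0`
is a proportional fee on volume, then the expected uncontested PNL after fees of trading
every block is at most that of the single composite trade at block `n`:
`E[∑ᵢ (Xᵢ Pᵢ + Yᵢ) − φ ∑ᵢ |Yᵢ|] ≤ E[(∑ᵢ Xᵢ) Pₙ + ∑ᵢ Yᵢ − φ |∑ᵢ Yᵢ|]`. -/
theorem martingale_fee_pnl_le {Ω : Type*} {m : MeasurableSpace Ω}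
    {μ : Measure Ω} [IsProbabilityMeasure μ]
    (ℱ : Filtration ℕ m) (n : ℕ)
    (P : ℕ → Ω → ℝ) (hP : Martingale P ℱ μ)
    (X Y : ℕ → Ω → ℝ)
    (hX : ∀ i, 1 ≤ i → i ≤ n → StronglyMeasurable[ℱ i] (X i))
    (hXbdd : ∀ i, 1 ≤ i → i ≤ n → ∃ C : ℝ, ∀ ω, |X i ω| ≤ C)
    (hY : ∀ i, 1 ≤ i → i ≤ n → StronglyMeasurable[ℱ i] (Y i))
    (hYint : ∀ i, 1 ≤ i → i ≤ n → Integrable (Y i) μ)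
    (φ : ℝ) (hφ : 0 ≤ φ) :
    (∫ ω, (∑ i ∈ Finset.Icc 1 n, (X i ω * P i ω + Y i ω)
        - φ * ∑ i ∈ Finset.Icc 1 n, |Y i ω|) ∂μ)
      ≤ ∫ ω, ((∑ i ∈ Finset.Icc 1 n, X i ω) * P n ω
          + ∑ i ∈ Finset.Icc 1 n, Y i ω
          - φ * |∑ i ∈ Finset.Icc 1 n, Y i ω|) ∂μ := by
  classical
  set s := Finset.Icc 1 n with hs
  have hmem : ∀ i ∈ s, 1 ≤ i ∧ i ≤ n := fun i hi => Finset.mem_Icc.mp hi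
  have hPint : ∀ i, Integrable (P i) μ := fun i => hP.integrable i
  have hXm : ∀ i ∈ s, AEStronglyMeasurable (X i) μ := fun i hi =>
    ((hX i (hmem i hi).1 (hmem i hi).2).mono (ℱ.le i)).aestronglyMeasurable
  have hXb : ∀ i ∈ s, ∃ C, ∀ ω, ‖X i ω‖ ≤ C := by
    intro i hi
    obtain ⟨C, hC⟩ := hXbdd i (hmem i hi).1 (hmem i hi).2
    exact ⟨C, fun ω => by simpa [Real.norm_eq_abs] using hC ω⟩
  have hXPi : ∀ i ∈ s, Integrable (fun ω => X i ω * P i ω) μ := fun i hi =>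
    (hXb i hi).elim fun C hC => (hPint i).bdd_mul (hXm i hi) (ae_of_all _ hC)
  have hXPn : ∀ i ∈ s, Integrable (fun ω => X i ω * P n ω) μ := fun i hi =>
    (hXb i hi).elim fun C hC => (hPint n).bdd_mul (hXm i hi) (ae_of_all _ hC)
  have hYi : ∀ i ∈ s, Integrable (Y i) μ := fun i hi =>
    hYint i (hmem i hi).1 (hmem i hi).2
  have key : ∀ i ∈ s, ∫ ω, X i ω * P i ω ∂μ = ∫ ω, X i ω * P n ω ∂μ := by
    intro i hi
    obtain ⟨h1, h2⟩ := hmem i hi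
    have hcond : μ[(X i) * (P n) | ℱ i] =ᵐ[μ] (X i) * μ[P n | ℱ i] :=
      condExp_mul_of_stronglyMeasurable_left (hX i h1 h2) (hXPn i hi) (hPint n)
    have hmart : μ[P n | ℱ i] =ᵐ[μ] P i := hP.condExp_ae_eq h2
    calc ∫ ω, X i ω * P i ω ∂μ
        = ∫ ω, (X i * μ[P n | ℱ i]) ω ∂μ := by
          refine integral_congr_ae (hmart.mono fun ω h => ?_)
          simp [h]
      _ = ∫ ω, (μ[(X i) * (P n) | ℱ i]) ω ∂μ := (integral_congr_ae hcond).symm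
      _ = ∫ ω, ((X i) * (P n)) ω ∂μ := integral_condExp (ℱ.le i)
      _ = ∫ ω, X i ω * P n ω ∂μ := rfl
  -- split left integral
  have hsumXPi : Integrable (fun ω => ∑ i ∈ s, (X i ω * P i ω + Y i ω)) μ :=
    integrable_finset_sum s fun i hi => (hXPi i hi).add (hYi i hi)
  have habsY : ∀ i ∈ s, Integrable (fun ω => |Y i ω|) μ := fun i hi => (hYi i hi).abs
  have hsumabsY : Integrable (fun ω => ∑ i ∈ s, |Y i ω|) μ :=
    integrable_finset_sum s habsY
  have hsumY : Integrable (fun ω => ∑ i ∈ s, Y i ω) μ :=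
    integrable_finset_sum s hYi
  have hsumXPn : Integrable (fun ω => ∑ i ∈ s, X i ω * P n ω) μ :=
    integrable_finset_sum s hXPn
  have hXPYi : ∀ i ∈ s, Integrable (fun ω => X i ω * P i ω + Y i ω) μ :=
    fun i hi => (hXPi i hi).add (hYi i hi)
  have hL : (∫ ω, (∑ i ∈ s, (X i ω * P i ω + Y i ω) - φ * ∑ i ∈ s, |Y i ω|) ∂μ)
      = (∑ i ∈ s, ∫ ω, X i ω * P i ω ∂μ) + (∑ i ∈ s, ∫ ω, Y i ω ∂μ)
        - φ * ∫ ω, ∑ i ∈ s, |Y i ω| ∂μ := by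
    rw [integral_sub hsumXPi (hsumabsY.const_mul φ), integral_const_mul,
      integral_finset_sum s hXPYi]
    congr 1
    rw [← Finset.sum_add_distrib]
    exact Finset.sum_congr rfl fun i hi => integral_add (hXPi i hi) (hYi i hi)
  have hR : (∫ ω, ((∑ i ∈ s, X i ω) * P n ω + ∑ i ∈ s, Y i ω
        - φ * |∑ i ∈ s, Y i ω|) ∂μ)
      = (∑ i ∈ s, ∫ ω, X i ω * P n ω ∂μ) + (∑ i ∈ s, ∫ ω, Y i ω ∂μ)
        - φ * ∫ ω, |∑ i ∈ s, Y i ω| ∂μ := by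
    have h1 : (fun ω => (∑ i ∈ s, X i ω) * P n ω + ∑ i ∈ s, Y i ω
        - φ * |∑ i ∈ s, Y i ω|)
        = fun ω => (∑ i ∈ s, X i ω * P n ω) + ∑ i ∈ s, Y i ω
            - φ * |∑ i ∈ s, Y i ω| := by
      funext ω; rw [Finset.sum_mul]
    have hadd : Integrable (fun ω => (∑ i ∈ s, X i ω * P n ω) + ∑ i ∈ s, Y i ω) μ :=
      hsumXPn.add hsumY
    rw [h1, integral_sub hadd (hsumY.abs.const_mul φ),
      integral_add hsumXPn hsumY, integral_const_mul,
      integral_finset_sum s hXPn, integral_finset_sum s hYi]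
  rw [hL, hR, Finset.sum_congr rfl key]
  have hfee : φ * ∫ ω, |∑ i ∈ s, Y i ω| ∂μ ≤ φ * ∫ ω, ∑ i ∈ s, |Y i ω| ∂μ := by
    refine mul_le_mul_of_nonneg_left ?_ hφ
    refine integral_mono hsumY.abs hsumabsY fun ω => ?_
    exact Finset.abs_sum_le_sum_abs _ _
  linarith
end
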